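/- Let s, t ∈ ℝ with 0 ≤ s ≤ 4, s ≥ t, and s(t − s + 6) ≥ 4(1 + t). Then for all P, Q ∈ Γ_n with r ≤ p_i/q_i ≤ R for all i: ((r+1)/2)^{s−t−1} (sr + 4 − s) Ω_t(Q||P) ≤ ζ_s(P||Q) ≤ ((R+1)/2)^{s−t−1} (sR + 4 − s) Ω_t(Q||P). -/

import Mathlib

open Real Finset

/-- Relative information of type `s` (generalized Kullback-Leibler divergence). -/
noncomputable def Phi (n : ℕ) (s : ℝ) (p q : Fin n → ℝ) : ℝ :=
  if s = 0 then ∑ i, q i * Real.log (q i / p i)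
  else if s = 1 then ∑ i, p i * Real.log (p i / q i)
  else (s * (s - 1))⁻¹ * ((∑ i, (p i) ^ s * (q i) ^ (1 - s)) - 1)

/-- Unified relative JS and AG divergence of type `s`. -/
noncomputable def Omega (n : ℕ) (s : ℝ) (p q : Fin n → ℝ) : ℝ :=
  if s = 0 then ∑ i, p i * Real.log (2 * p i / (p i + q i))
  else if s = 1 then ∑ i, ((p i + q i) / 2) * Real.log ((p i + q i) / (2 * p i))
  else (s * (s - 1))⁻¹ * ((∑ i, p i * ((p i + q i) / (2 * p i)) ^ s) - 1)

/-- Relative J-divergence of type `s`. -/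
noncomputable def zeta (n : ℕ) (s : ℝ) (p q : Fin n → ℝ) : ℝ :=
  if s = 1 then ∑ i, (p i - q i) * Real.log ((p i + q i) / (2 * q i))
  else (s - 1)⁻¹ * ∑ i, (p i - q i) * ((p i + q i) / (2 * q i)) ^ (s - 1)

/-! Both divergences are Csiszár sums over the likelihood ratio `x = pᵢ / qᵢ`:
`ζ_s(P‖Q) = ∑ qᵢ f(pᵢ / qᵢ)` and `Ω_t(Q‖P) = ∑ qᵢ g(pᵢ / qᵢ)`, with `f(1) = g(1) = 0`,
`g'' ≥ 0` and `f'' = h g''` for `h(x) = ((x + 1) / 2) ^ (s - t - 1) (s x + 4 - s)`.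
The derivative of `h` has the sign of `s (s - t) x + s (t - s + 6) - 4 (1 + t)`, so the
hypotheses make `h` nondecreasing on `[0, ∞)`. Hence `f - h(r) g` and `h(R) g - f` are convex
on the range of the ratios, and Jensen's inequality at the mean `∑ qᵢ (pᵢ / qᵢ) = 1` gives
both bounds. -/

theorem convexOn_of_hasDerivAt2_nonneg {D : Set ℝ} (hD : Convex ℝ D) {f f' f'' : ℝ → ℝ}
    (hf : ∀ x ∈ D, HasDerivAt f (f' x) x) (hf' : ∀ x ∈ D, HasDerivAt f' (f'' x) x)
    (hf'' : ∀ x ∈ D, 0 ≤ f'' x) : ConvexOn ℝ D f :=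
  convexOn_of_hasDerivWithinAt2_nonneg hD
    (fun x hx => (hf x hx).continuousAt.continuousWithinAt)
    (fun x hx => (hf x (interior_subset hx)).hasDerivWithinAt)
    (fun x hx => (hf' x (interior_subset hx)).hasDerivWithinAt)
    (fun x hx => hf'' x (interior_subset hx))

theorem sum_mul_apply_div_nonneg_of_convexOn {ι : Type*} {u : Finset ι} {D : Set ℝ}
    {F : ℝ → ℝ} (hF : ConvexOn ℝ D F) (hF1 : F 1 = 0) {p q : ι → ℝ} (hq : ∀ i ∈ u, 0 < q i)
    (hp1 : ∑ i ∈ u, p i = 1) (hq1 : ∑ i ∈ u, q i = 1) (hD : ∀ i ∈ u, p i / q i ∈ D) :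
    0 ≤ ∑ i ∈ u, q i * F (p i / q i) := by
  have hmean : ∑ i ∈ u, q i • (p i / q i) = 1 := by
    rw [← hp1]
    exact sum_congr rfl fun i hi => by rw [smul_eq_mul, mul_div_cancel₀ _ (hq i hi).ne']
  have := hF.map_sum_le (fun i hi => (hq i hi).le) hq1 hD
  rwa [hmean, hF1] at this

theorem sum_mul_apply_div_le_of_deriv2_le {ι : Type*} {u : Finset ι} {D : Set ℝ}
    (hD : Convex ℝ D) {f f' f'' g g' g'' : ℝ → ℝ}
    (hf : ∀ x ∈ D, HasDerivAt f (f' x) x) (hf' : ∀ x ∈ D, HasDerivAt f' (f'' x) x)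
    (hg : ∀ x ∈ D, HasDerivAt g (g' x) x) (hg' : ∀ x ∈ D, HasDerivAt g' (g'' x) x)
    (hfg : ∀ x ∈ D, f'' x ≤ g'' x) (hf1 : f 1 = 0) (hg1 : g 1 = 0)
    {p q : ι → ℝ} (hq : ∀ i ∈ u, 0 < q i)
    (hp1 : ∑ i ∈ u, p i = 1) (hq1 : ∑ i ∈ u, q i = 1) (hpq : ∀ i ∈ u, p i / q i ∈ D) :
    ∑ i ∈ u, q i * f (p i / q i) ≤ ∑ i ∈ u, q i * g (p i / q i) := by
  have hconv : ConvexOn ℝ D (g - f) :=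
    convexOn_of_hasDerivAt2_nonneg hD (fun x hx => (hg x hx).sub (hf x hx))
      (fun x hx => (hg' x hx).sub (hf' x hx)) (fun x hx => sub_nonneg.2 (hfg x hx))
  have := sum_mul_apply_div_nonneg_of_convexOn hconv (by simp [hf1, hg1]) hq hp1 hq1 hpq
  simp only [Pi.sub_apply, mul_sub, sum_sub_distrib] at this
  linarith

theorem hasDerivAt_half_succ_rpow (c : ℝ) {x : ℝ} (hx : -1 < x) :
    HasDerivAt (fun y => ((y + 1) / 2) ^ c) (c / 2 * ((x + 1) / 2) ^ (c - 1)) x := by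
  have h := ((hasDerivAt_id' x).add_const 1).div_const 2
  refine (h.rpow_const (p := c) (Or.inl (by linarith))).congr_deriv ?_
  ring

theorem hasDerivAt_log_half_succ {x : ℝ} (hx : -1 < x) :
    HasDerivAt (fun y => log ((y + 1) / 2)) (x + 1)⁻¹ x := by
  refine ((((hasDerivAt_id' x).add_const 1).div_const 2).log (by linarith)).congr_deriv ?_
  field_simp

noncomputable def zetaGen (s : ℝ) : ℝ → ℝ :=
  if s = 1 then fun x => (x - 1) * log ((x + 1) / 2)
  else fun x => (x - 1) * ((x + 1) / 2) ^ (s - 1) / (s - 1)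

noncomputable def zetaGenDeriv (s : ℝ) : ℝ → ℝ :=
  if s = 1 then fun x => log ((x + 1) / 2) + (x - 1) / (x + 1)
  else fun x => ((x + 1) / 2) ^ (s - 1) / (s - 1) + (x - 1) / 2 * ((x + 1) / 2) ^ (s - 2)

noncomputable def omegaGen (t : ℝ) : ℝ → ℝ :=
  if t = 0 then fun x => -log ((x + 1) / 2)
  else if t = 1 then fun x => (x + 1) / 2 * log ((x + 1) / 2)
  else fun x => (((x + 1) / 2) ^ t - 1) / (t * (t - 1))

noncomputable def omegaGenDeriv (t : ℝ) : ℝ → ℝ :=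
  if t = 0 then fun x => -(x + 1)⁻¹
  else if t = 1 then fun x => (log ((x + 1) / 2) + 1) / 2
  else fun x => ((x + 1) / 2) ^ (t - 1) / (2 * (t - 1))

noncomputable def zetaGenDeriv2 (s x : ℝ) : ℝ := ((x + 1) / 2) ^ (s - 3) * (s * x + 4 - s) / 4

noncomputable def omegaGenDeriv2 (t x : ℝ) : ℝ := ((x + 1) / 2) ^ (t - 2) / 4

theorem zetaGen_one (s : ℝ) : zetaGen s 1 = 0 := by
  unfold zetaGen; split_ifs <;> simp

theorem omegaGen_one (t : ℝ) : omegaGen t 1 = 0 := by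
  unfold omegaGen; split_ifs <;> norm_num

theorem hasDerivAt_zetaGen (s : ℝ) {x : ℝ} (hx : -1 < x) :
    HasDerivAt (zetaGen s) (zetaGenDeriv s x) x := by
  have hx1 : x + 1 ≠ 0 := by linarith
  unfold zetaGen zetaGenDeriv
  split_ifs with hs
  · have h := ((hasDerivAt_id' x).sub_const 1).mul (hasDerivAt_log_half_succ hx)
    refine h.congr_deriv ?_
    field_simp
  · have hs1 : s - 1 ≠ 0 := sub_ne_zero.2 hs
    have h := ((hasDerivAt_id' x).sub_const 1).mul (hasDerivAt_half_succ_rpow (s - 1) hx)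
    refine (h.div_const (s - 1)).congr_deriv ?_
    rw [show s - 1 - 1 = s - 2 by ring]
    field_simp

theorem hasDerivAt_zetaGenDeriv (s : ℝ) {x : ℝ} (hx : -1 < x) :
    HasDerivAt (zetaGenDeriv s) (zetaGenDeriv2 s x) x := by
  have hu : 0 < (x + 1) / 2 := by linarith
  have hx1 : x + 1 ≠ 0 := by linarith
  unfold zetaGenDeriv zetaGenDeriv2
  split_ifs with hs
  · subst hs
    have h := ((hasDerivAt_id' x).sub_const 1).div ((hasDerivAt_id' x).add_const 1) hx1
    refine ((hasDerivAt_log_half_succ hx).add h).congr_deriv ?_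
    rw [show (1 : ℝ) - 3 = -2 by norm_num, rpow_neg hu.le, rpow_two]
    field_simp
    ring
  · have hs1 : s - 1 ≠ 0 := sub_ne_zero.2 hs
    have h := (((hasDerivAt_id' x).sub_const 1).div_const 2).mul
      (hasDerivAt_half_succ_rpow (s - 2) hx)
    refine (((hasDerivAt_half_succ_rpow (s - 1) hx).div_const (s - 1)).add h).congr_deriv ?_
    rw [show s - 1 - 1 = s - 2 by ring, show s - 2 - 1 = s - 3 by ring,
      show s - 2 = s - 3 + 1 by ring, rpow_add_one hu.ne']
    field_simp
    ring

theorem hasDerivAt_omegaGen (t : ℝ) {x : ℝ} (hx : -1 < x) :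
    HasDerivAt (omegaGen t) (omegaGenDeriv t x) x := by
  have hx1 : x + 1 ≠ 0 := by linarith
  unfold omegaGen omegaGenDeriv
  split_ifs with ht0 ht1
  · exact (hasDerivAt_log_half_succ hx).neg
  · have h := (((hasDerivAt_id' x).add_const 1).div_const 2).mul (hasDerivAt_log_half_succ hx)
    refine h.congr_deriv ?_
    field_simp
  · have ht1' : t - 1 ≠ 0 := sub_ne_zero.2 ht1
    have h := (hasDerivAt_half_succ_rpow t hx).sub_const 1
    refine (h.div_const (t * (t - 1))).congr_deriv ?_
    field_simp

theorem hasDerivAt_omegaGenDeriv (t : ℝ) {x : ℝ} (hx : -1 < x) :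
    HasDerivAt (omegaGenDeriv t) (omegaGenDeriv2 t x) x := by
  have hu : 0 < (x + 1) / 2 := by linarith
  have hx1 : x + 1 ≠ 0 := by linarith
  unfold omegaGenDeriv omegaGenDeriv2
  split_ifs with ht0 ht1
  · subst ht0
    refine ((((hasDerivAt_id' x).add_const 1).inv hx1).neg).congr_deriv ?_
    rw [show (0 : ℝ) - 2 = -2 by norm_num, rpow_neg hu.le, rpow_two]
    field_simp
    ring
  · subst ht1
    refine (((hasDerivAt_log_half_succ hx).add_const 1).div_const 2).congr_deriv ?_
    rw [show (1 : ℝ) - 2 = -1 by norm_num, rpow_neg_one]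
    field_simp
    ring
  · have ht1' : t - 1 ≠ 0 := sub_ne_zero.2 ht1
    have h := hasDerivAt_half_succ_rpow (t - 1) hx
    refine (h.div_const (2 * (t - 1))).congr_deriv ?_
    rw [show t - 1 - 1 = t - 2 by ring]
    field_simp
    ring

theorem zeta_eq_sum_mul_zetaGen (n : ℕ) (s : ℝ) (p q : Fin n → ℝ) (hq : ∀ i, 0 < q i) :
    zeta n s p q = ∑ i, q i * zetaGen s (p i / q i) := by
  unfold zeta zetaGen
  split_ifs
  · refine sum_congr rfl fun i _ => ?_
    field_simp [(hq i).ne']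
  · rw [mul_sum]
    refine sum_congr rfl fun i _ => ?_
    field_simp [(hq i).ne']

theorem Omega_eq_sum_mul_omegaGen (n : ℕ) (t : ℝ) (p q : Fin n → ℝ) (hq : ∀ i, 0 < q i)
    (hq1 : ∑ i, q i = 1) :
    Omega n t q p = ∑ i, q i * omegaGen t (p i / q i) := by
  have harg : ∀ i, (q i + p i) / (2 * q i) = (p i / q i + 1) / 2 := fun i => by
    field_simp [(hq i).ne']
    ring
  unfold Omega omegaGen
  split_ifs
  · refine sum_congr rfl fun i _ => ?_
    rw [← inv_div, harg, log_inv]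
  · refine sum_congr rfl fun i _ => ?_
    rw [harg]
    field_simp [(hq i).ne']
    ring
  · simp only [harg, mul_sub, mul_one, mul_div_assoc', ← sum_div, sum_sub_distrib, hq1]
    ring

noncomputable def derivRatio (s t x : ℝ) : ℝ := ((x + 1) / 2) ^ (s - t - 1) * (s * x + 4 - s)

theorem zetaGenDeriv2_eq_derivRatio_mul (s t : ℝ) {x : ℝ} (hx : -1 < x) :
    zetaGenDeriv2 s x = derivRatio s t x * omegaGenDeriv2 t x := by
  rw [zetaGenDeriv2, omegaGenDeriv2, derivRatio, show s - 3 = (s - t - 1) + (t - 2) by ring,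
    rpow_add (by linarith)]
  ring

theorem hasDerivAt_derivRatio (s t : ℝ) {x : ℝ} (hx : -1 < x) :
    HasDerivAt (derivRatio s t)
      (((x + 1) / 2) ^ (s - t - 2) * (s * (s - t) * x + (s * (t - s + 6) - 4 * (1 + t))) / 2)
      x := by
  have hu : 0 < (x + 1) / 2 := by linarith
  refine ((hasDerivAt_half_succ_rpow (s - t - 1) hx).mul
    ((((hasDerivAt_id' x).const_mul s).add_const 4).sub_const s)).congr_deriv ?_
  rw [show s - t - 1 - 1 = s - t - 2 by ring,
    show s - t - 1 = s - t - 2 + 1 by ring, rpow_add_one hu.ne']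
  ring

theorem monotoneOn_derivRatio {s t : ℝ} (hs : 0 ≤ s) (hts : t ≤ s)
    (h : 4 * (1 + t) ≤ s * (t - s + 6)) : MonotoneOn (derivRatio s t) (Set.Ici 0) := by
  have hderiv := fun x (hx : x ∈ Set.Ici (0 : ℝ)) =>
    hasDerivAt_derivRatio s t (by linarith [Set.mem_Ici.1 hx] : -1 < x)
  refine monotoneOn_of_hasDerivWithinAt_nonneg (convex_Ici 0)
    (fun x hx => (hderiv x hx).continuousAt.continuousWithinAt)
    (fun x hx => (hderiv x (interior_subset hx)).hasDerivWithinAt) fun x hx => ?_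
  have hx : 0 ≤ x := interior_subset (s := Set.Ici (0 : ℝ)) hx
  have hlin : 0 ≤ s * (s - t) * x := by have := sub_nonneg.2 hts; positivity
  have hpow : 0 ≤ ((x + 1) / 2) ^ (s - t - 2) := rpow_nonneg (by linarith) _
  have := sub_nonneg.2 h
  positivity

theorem omegaGenDeriv2_nonneg (t : ℝ) {x : ℝ} (hx : -1 < x) : 0 ≤ omegaGenDeriv2 t x := by
  unfold omegaGenDeriv2
  have := rpow_nonneg (by linarith : 0 ≤ (x + 1) / 2) (t - 2)
  positivity

theorem derivRatio_mul_Omega_le_zeta {s t : ℝ} (hs : 0 ≤ s) (hts : t ≤ s)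
    (h : 4 * (1 + t) ≤ s * (t - s + 6)) {n : ℕ} {p q : Fin n → ℝ} (hq : ∀ i, 0 < q i)
    (hp1 : ∑ i, p i = 1) (hq1 : ∑ i, q i = 1) {r : ℝ} (hr : 0 ≤ r) (hpq : ∀ i, r ≤ p i / q i) :
    derivRatio s t r * Omega n t q p ≤ zeta n s p q := by
  have hD : ∀ x ∈ Set.Ici r, -1 < x := fun x hx => by linarith [Set.mem_Ici.1 hx]
  have := sum_mul_apply_div_le_of_deriv2_le (convex_Ici r)
    (fun x hx => (hasDerivAt_omegaGen t (hD x hx)).const_mul (derivRatio s t r))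
    (fun x hx => (hasDerivAt_omegaGenDeriv t (hD x hx)).const_mul (derivRatio s t r))
    (fun x hx => hasDerivAt_zetaGen s (hD x hx))
    (fun x hx => hasDerivAt_zetaGenDeriv s (hD x hx))
    (fun x hx => by
      rw [zetaGenDeriv2_eq_derivRatio_mul s t (hD x hx)]
      exact mul_le_mul_of_nonneg_right
        (monotoneOn_derivRatio hs hts h (Set.mem_Ici.2 hr) (hr.trans hx) hx)
        (omegaGenDeriv2_nonneg t (hD x hx)))
    (by simp [omegaGen_one]) (zetaGen_one s) (fun i _ => hq i) hp1 hq1 (fun i _ => hpq i)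
  rw [zeta_eq_sum_mul_zetaGen n s p q hq, Omega_eq_sum_mul_omegaGen n t p q hq hq1, mul_sum]
  simpa only [mul_left_comm] using this

theorem zeta_le_derivRatio_mul_Omega {s t : ℝ} (hs : 0 ≤ s) (hts : t ≤ s)
    (h : 4 * (1 + t) ≤ s * (t - s + 6)) {n : ℕ} {p q : Fin n → ℝ} (hq : ∀ i, 0 < q i)
    (hp1 : ∑ i, p i = 1) (hq1 : ∑ i, q i = 1) {R : ℝ} (hpq : ∀ i, p i / q i ∈ Set.Icc 0 R) :
    zeta n s p q ≤ derivRatio s t R * Omega n t q p := by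
  have hD : ∀ x ∈ Set.Icc 0 R, -1 < x := fun x hx => by linarith [hx.1]
  have := sum_mul_apply_div_le_of_deriv2_le (convex_Icc 0 R)
    (fun x hx => hasDerivAt_zetaGen s (hD x hx))
    (fun x hx => hasDerivAt_zetaGenDeriv s (hD x hx))
    (fun x hx => (hasDerivAt_omegaGen t (hD x hx)).const_mul (derivRatio s t R))
    (fun x hx => (hasDerivAt_omegaGenDeriv t (hD x hx)).const_mul (derivRatio s t R))
    (fun x hx => by
      rw [zetaGenDeriv2_eq_derivRatio_mul s t (hD x hx)]
      exact mul_le_mul_of_nonneg_right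
        (monotoneOn_derivRatio hs hts h hx.1 (hx.1.trans hx.2) hx.2)
        (omegaGenDeriv2_nonneg t (hD x hx)))
    (zetaGen_one s) (by simp [omegaGen_one]) (fun i _ => hq i) hp1 hq1 (fun i _ => hpq i)
  rw [zeta_eq_sum_mul_zetaGen n s p q hq, Omega_eq_sum_mul_omegaGen n t p q hq hq1, mul_sum]
  simpa only [mul_left_comm] using this

theorem stmt_16_general (s t : ℝ) (hs0 : 0 ≤ s) (hst : t ≤ s) (hts : 4 * (1 + t) ≤ s * (t - s + 6))
    (n : ℕ) (p q : Fin n → ℝ)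
    (hq : ∀ i, 0 < q i)
    (hp1 : ∑ i, p i = 1) (hq1 : ∑ i, q i = 1)
    (r R : ℝ) (hr : 0 < r)
    (hbound : ∀ i, r ≤ p i / q i ∧ p i / q i ≤ R) :
    ((r + 1) / 2) ^ (s - t - 1) * (s * r + 4 - s) * Omega n t q p ≤ zeta n s p q ∧
      zeta n s p q ≤ ((R + 1) / 2) ^ (s - t - 1) * (s * R + 4 - s) * Omega n t q p :=
  ⟨derivRatio_mul_Omega_le_zeta hs0 hst hts hq hp1 hq1 hr.le fun i => (hbound i).1,
    zeta_le_derivRatio_mul_Omega hs0 hst hts hq hp1 hq1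
      fun i => ⟨hr.le.trans (hbound i).1, (hbound i).2⟩⟩

theorem stmt_16 (s t : ℝ) (hs0 : 0 ≤ s) (hs4 : s ≤ 4) (hst : t ≤ s) (hts : 4 * (1 + t) ≤ s * (t - s + 6))
    (n : ℕ) (hn : 2 ≤ n) (p q : Fin n → ℝ)
    (hp : ∀ i, 0 < p i) (hq : ∀ i, 0 < q i)
    (hp1 : ∑ i, p i = 1) (hq1 : ∑ i, q i = 1)
    (r R : ℝ) (hr : 0 < r) (hrR : r ≤ R)
    (hbound : ∀ i, r ≤ p i / q i ∧ p i / q i ≤ R) :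
    ((r + 1) / 2) ^ (s - t - 1) * (s * r + 4 - s) * Omega n t q p ≤ zeta n s p q ∧
      zeta n s p q ≤ ((R + 1) / 2) ^ (s - t - 1) * (s * R + 4 - s) * Omega n t q p :=
  stmt_16_general s t hs0 hst hts n p q hq hp1 hq1 r R hr hbound
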